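/- arXiv:1906.01306 — 7 statements merged into one kernel-verified Lean document; each statement's English description precedes it below -/
import Mathlib

section
/- Let C be a monoidal category which is preadditive with tensor product additive in each variable, and let F : ℕ ⥤ C be a functor admitting a colimit. Suppose: (i) each F(n) carries a homotopy left unital multiplication with unit e_n : 𝟙_C ⟶ F(n) and multiplication m_n : F(n) ⊗ F(n) ⟶ F(n), and the units are compatible with the transition maps, i.e. e_n ≫ F(n ⟶ m) = e_m whenever n ≤ m; (ii) the functor Hom(𝟙_C, −) : C ⥤ Type preserves the colimit of F; (iii) the colimit of F is a zero object. Then there exists n such that F(n) is a zero object. -/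
open CategoryTheory CategoryTheory.Limits CategoryTheory.MonoidalCategory

/-- A sequential colimit of objects with homotopy left unital multiplications and
compatible units, such that the unit object `𝟙_ C` is compact with respect to this
colimit, is a zero object only if some finite stage is already a zero object. -/
theorem sequential_colimit_homotopy_left_unital_isZero
    {C : Type*} [Category C] [MonoidalCategory C] [Preadditive C] [MonoidalPreadditive C]
    (F : ℕ ⥤ C) [HasColimit F]
    (e : ∀ n : ℕ, 𝟙_ C ⟶ F.obj n) (m : ∀ n : ℕ, F.obj n ⊗ F.obj n ⟶ F.obj n)
    (hunital : ∀ n : ℕ, (λ_ (F.obj n)).inv ≫ (e n ▷ F.obj n) ≫ m n = 𝟙 (F.obj n))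
    (hcompat : ∀ (i j : ℕ) (h : i ≤ j), e i ≫ F.map (homOfLE h) = e j)
    [PreservesColimit F (coyoneda.obj (Opposite.op (𝟙_ C)))]
    (hz : IsZero (colimit F)) :
    ∃ n : ℕ, IsZero (F.obj n) := by
  -- the image cocone is a colimit in Type
  let t := isColimitOfPreserves (coyoneda.obj (Opposite.op (𝟙_ C))) (colimit.isColimit F)
  have h0 : ((coyoneda.obj (Opposite.op (𝟙_ C))).mapCocone (colimit.cocone F)).ι.app 0 (e 0)
      = ((coyoneda.obj (Opposite.op (𝟙_ C))).mapCocone (colimit.cocone F)).ι.app 0 (0 : 𝟙_ C ⟶ F.obj 0) := by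
    apply hz.eq_of_tgt
  rw [Types.FilteredColimit.isColimit_eq_iff _ t] at h0
  obtain ⟨k, f, g, hfg⟩ := h0
  refine ⟨k, ?_⟩
  have hek : e k = 0 := by
    have := hcompat 0 k (by omega)
    change e 0 ≫ F.map f = (0 : 𝟙_ C ⟶ F.obj 0) ≫ F.map g at hfg
    have hf : f = homOfLE (Nat.zero_le k) := rfl
    rw [hf] at hfg
    rw [this] at hfg
    simpa using hfg
  rw [IsZero.iff_id_eq_zero]
  rw [← hunital k, hek]
  simp
end

section
/- Let p be a prime number and α a finite type with m elements. For the rotation action of ZMod p on the finite type of functions ZMod p → α, given by (g • f)(x) = f(x + g), the prime p divides m^p − m, and the number of orbits of the action equals m + (m^p − m)/p; equivalently, p times the cardinality of the quotient of (ZMod p → α) by this action equals p·m + (m^p − m). -/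
/-- The rotation (cyclic shift) action of `ZMod p` on `p`-tuples of elements of `α`,
encoded as functions `ZMod p → α`: `(g +ᵥ f) x = f (x + g)`. -/
instance rotationAddAction (p : ℕ) (α : Type*) : AddAction (ZMod p) (ZMod p → α) where
  vadd g f := fun x => f (x + g)
  zero_vadd f := by
    funext x
    show f (x + 0) = f x
    rw [add_zero]
  add_vadd g g' f := by
    funext x
    show f (x + (g + g')) = f (x + g + g')
    rw [add_assoc]

lemma shift_const_aux {p : ℕ} [Fact p.Prime] {α : Type*} {g : ZMod p} (hg : g ≠ 0)
    {f : ZMod p → α} (hf : ∀ x, f (x + g) = f x) (y : ZMod p) : f y = f 0 := by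
  have hn : ∀ n : ℕ, f ((n : ℕ) • g) = f 0 := by
    intro n
    induction n with
    | zero => simp
    | succ n ih =>
      rw [succ_nsmul, hf, ih]
  have hy : y = ((y * g⁻¹).val : ℕ) • g := by
    rw [nsmul_eq_mul, ZMod.natCast_rightInverse (y * g⁻¹), mul_assoc,
      inv_mul_cancel₀ hg, mul_one]
  rw [hy, hn]

/-- For `g ≠ 0`, the fixed points of the shift by `g` are the constant functions. -/
def fixedByEquiv (p : ℕ) [Fact p.Prime] (α : Type*) (g : ZMod p) (hg : g ≠ 0) :
    AddAction.fixedBy (ZMod p → α) g ≃ α where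
  toFun f := f.1 0
  invFun a := ⟨fun _ => a, rfl⟩
  left_inv f := by
    refine Subtype.ext (funext fun x => ?_)
    have hf : ∀ x, f.1 (x + g) = f.1 x := fun x => congrFun f.2 x
    exact (shift_const_aux hg hf x).symm
  right_inv a := rfl

/-- For the rotation action of `ZMod p` (`p` prime) on `ZMod p → α` with `α` of
cardinality `m`: `p` divides `m^p − m`, the number of orbits is `m + (m^p − m)/p`, and
equivalently `p` times the number of orbits equals `p·m + (m^p − m)`. -/
theorem rotation_action_card_orbits (p : ℕ) [Fact p.Prime] (α : Type*) [Fintype α]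
    (m : ℕ) (hm : Fintype.card α = m) :
    p ∣ m ^ p - m ∧
    Nat.card (Quotient (AddAction.orbitRel (ZMod p) (ZMod p → α))) = m + (m ^ p - m) / p ∧
    p * Nat.card (Quotient (AddAction.orbitRel (ZMod p) (ZMod p → α))) =
      p * m + (m ^ p - m) := by
  classical
  have hp : p.Prime := Fact.out
  have hp0 : 0 < p := hp.pos
  letI : ∀ a : ZMod p, Fintype (AddAction.fixedBy (ZMod p → α) a) := fun a =>
    Fintype.ofFinite _
  letI : Fintype (AddAction.orbitRel.Quotient (ZMod p) (ZMod p → α)) := Fintype.ofFinite _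
  have hb := AddAction.sum_card_fixedBy_eq_card_orbits_mul_card_addGroup (ZMod p) (ZMod p → α)
  rw [← Finset.add_sum_erase _ _ (Finset.mem_univ (0 : ZMod p))] at hb
  have h0 : Fintype.card (AddAction.fixedBy (ZMod p → α) (0 : ZMod p)) = m ^ p := by
    rw [Fintype.card_congr (Equiv.subtypeUnivEquiv (fun f => by
      show (0 : ZMod p) +ᵥ f = f; exact zero_vadd _ f))]
    rw [Fintype.card_fun, hm, ZMod.card]
  have hgc : ∀ g ∈ Finset.univ.erase (0 : ZMod p),
      Fintype.card (AddAction.fixedBy (ZMod p → α) g) = m := by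
    intro g hg
    rw [Fintype.card_congr (fixedByEquiv p α g (Finset.mem_erase.mp hg).1), hm]
  rw [h0, Finset.sum_congr rfl hgc, Finset.sum_const, smul_eq_mul,
    Finset.card_erase_of_mem (Finset.mem_univ _), Finset.card_univ, ZMod.card] at hb
  -- hb : m ^ p + (p - 1) * m = card Ω * p
  set N := Nat.card (Quotient (AddAction.orbitRel (ZMod p) (ZMod p → α))) with hN
  have hNcard : N = Fintype.card (AddAction.orbitRel.Quotient (ZMod p) (ZMod p → α)) :=
    Nat.card_eq_fintype_card
  have hm_le : m ≤ m ^ p := Nat.le_self_pow hp.ne_zero m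
  have key : p * N = p * m + (m ^ p - m) := by
    rw [hNcard, mul_comm, hb.symm]
    have h1 : p * m = (p - 1) * m + m := by
      rw [Nat.sub_one_mul]
      have : m ≤ p * m := Nat.le_mul_of_pos_left m hp0
      omega
    omega
  have hNm : m ≤ N := by
    have : p * m ≤ p * N := by omega
    exact Nat.le_of_mul_le_mul_left this hp0
  have hsub : m ^ p - m = p * (N - m) := by
    rw [Nat.mul_sub]
    omega
  refine ⟨⟨N - m, hsub⟩, ?_, key⟩
  rw [hsub, Nat.mul_div_cancel_left _ hp0]
  omega
end

section
/- Let A be a commutative ring and I an ideal of A such that A is I-adically complete. Let N ≥ 1 and let f ∈ A⟦X⟧ be a formal power series whose coefficient of X^i lies in I for every i < N and whose coefficient of X^N is a unit of A. Then for every power series F ∈ A⟦X⟧ there exist a unique power series q ∈ A⟦X⟧ and a unique polynomial r ∈ A[X] of degree strictly less than N such that F = f·q + r. -/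
namespace WeierstrassDivisionAux

variable {A : Type*} [CommRing A]

/-- Shift a power series down by `N`: drop the first `N` coefficients. -/
noncomputable def shift (N : ℕ) (G : PowerSeries A) : PowerSeries A :=
  PowerSeries.mk fun i => PowerSeries.coeff (i + N) G

@[simp] lemma coeff_shift (N i : ℕ) (G : PowerSeries A) :
    PowerSeries.coeff i (shift N G) = PowerSeries.coeff (i + N) G :=
  PowerSeries.coeff_mk _ _

lemma shift_sub (N : ℕ) (G H : PowerSeries A) :
    shift N (G - H) = shift N G - shift N H := by
  ext i; simp

lemma trunc_decomp (N : ℕ) (G : PowerSeries A) :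
    G = (PowerSeries.trunc N G : PowerSeries A) + PowerSeries.X ^ N * shift N G := by
  ext i
  rw [map_add, Polynomial.coeff_coe, PowerSeries.coeff_trunc]
  by_cases h : i < N
  · rw [if_pos h, PowerSeries.coeff_X_pow_mul' _ _ _]
    simp [Nat.not_le.mpr h]
  · rw [if_neg h, PowerSeries.coeff_X_pow_mul' _ _ _, if_pos (Nat.le_of_not_lt h)]
    simp [Nat.sub_add_cancel (Nat.le_of_not_lt h)]

lemma coeff_mul_mem (J K : Ideal A) {G H : PowerSeries A}
    (hG : ∀ i, PowerSeries.coeff i G ∈ J) (hH : ∀ i, PowerSeries.coeff i H ∈ K)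
    (n : ℕ) : PowerSeries.coeff n (G * H) ∈ J * K := by
  rw [PowerSeries.coeff_mul]
  exact Ideal.sum_mem _ fun p _ => Ideal.mul_mem_mul (hG p.1) (hH p.2)

lemma coeff_mul_mem_left (J : Ideal A) {G : PowerSeries A} (H : PowerSeries A)
    (hG : ∀ i, PowerSeries.coeff i G ∈ J)
    (n : ℕ) : PowerSeries.coeff n (H * G) ∈ J := by
  rw [PowerSeries.coeff_mul]
  exact Ideal.sum_mem _ fun p _ => Ideal.mul_mem_left _ _ (hG p.2)

lemma coe_poly_shift_eq_zero {N : ℕ} {s : Polynomial A} (hs : s.degree < (N : ℕ)) :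
    shift N (s : PowerSeries A) = 0 := by
  ext i
  rw [coeff_shift, Polynomial.coeff_coe, map_zero]
  exact Polynomial.coeff_eq_zero_of_degree_lt
    (lt_of_lt_of_le hs (by exact_mod_cast Nat.le_add_left N i))

end WeierstrassDivisionAux

open WeierstrassDivisionAux

/-- Weierstrass division over an `I`-adically complete ring: if `f ∈ A⟦X⟧` has
coefficients below degree `N` in `I` and unit `N`-th coefficient, then every power series
`F` can be written uniquely as `F = f·q + r` with `q` a power series and `r` a polynomial
of degree `< N`. -/
theorem weierstrass_division {A : Type*} [CommRing A] (I : Ideal A)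
    [IsAdicComplete I A] (N : ℕ) (hN : 1 ≤ N) (f : PowerSeries A)
    (hI : ∀ i < N, PowerSeries.coeff i f ∈ I)
    (hunit : IsUnit (PowerSeries.coeff N f))
    (F : PowerSeries A) :
    ∃! qr : PowerSeries A × Polynomial A,
      qr.2.degree < (N : ℕ) ∧ F = f * qr.1 + (qr.2 : PowerSeries A) := by
  classical
  set a : PowerSeries A := (PowerSeries.trunc N f : PowerSeries A) with ha_def
  set b : PowerSeries A := shift N f with hb_def
  -- all coefficients of `a` lie in `I`
  have ha : ∀ i, PowerSeries.coeff i a ∈ I := by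
    intro i
    rw [ha_def, Polynomial.coeff_coe, PowerSeries.coeff_trunc]
    split
    · exact hI i ‹_›
    · exact I.zero_mem
  -- `b` is a unit
  have hbu : IsUnit b := by
    rw [PowerSeries.isUnit_iff_constantCoeff, hb_def,
      ← PowerSeries.coeff_zero_eq_constantCoeff]
    simpa using hunit
  obtain ⟨bu, hbu_eq⟩ := hbu
  set binv : PowerSeries A := (↑bu⁻¹ : PowerSeries A) with hbinv_def
  have hbinv : b * binv = 1 := by
    rw [← hbu_eq, hbinv_def]; exact_mod_cast bu.mul_inv
  have hfab : f = a + PowerSeries.X ^ N * b := trunc_decomp N f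
  -- multiplying by `a` raises the power of `I` containing the coefficients
  have hstep : ∀ (k : ℕ) (d : PowerSeries A),
      (∀ j, PowerSeries.coeff j d ∈ I ^ k) →
      ∀ j, PowerSeries.coeff j (a * d) ∈ I ^ (k + 1) := by
    intro k d hd j
    rw [pow_succ']
    exact coeff_mul_mem I (I ^ k) ha hd j
  -- if `b * d + shift N (a * d) = 0` then `d = 0`
  have key : ∀ d : PowerSeries A, b * d + shift N (a * d) = 0 → d = 0 := by
    intro d hd
    have hpow : ∀ k j, PowerSeries.coeff j d ∈ I ^ k := by
      intro k
      induction k with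
      | zero => intro j; simp
      | succ k ih =>
        intro j
        have h1 : ∀ j, PowerSeries.coeff j (a * d) ∈ I ^ (k + 1) := hstep k d ih
        have h2 : ∀ j, PowerSeries.coeff j (b * d) ∈ I ^ (k + 1) := by
          intro j
          have hbd : b * d = -shift N (a * d) := by linear_combination hd
          rw [hbd, map_neg]
          exact neg_mem (by simpa using h1 (j + N))
        have hrw : d = binv * (b * d) := by
          rw [← mul_assoc, mul_comm binv b, hbinv, one_mul]
        rw [hrw]
        exact coeff_mul_mem_left _ _ h2 j
    ext j
    rw [map_zero]
    refine IsHausdorff.haus (inferInstance : IsHausdorff I A) _ fun n => ?_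
    rw [SModEq.zero, smul_eq_mul, Ideal.mul_top]
    exact hpow n j
  -- uniqueness of the decomposition
  have uniq : ∀ (q₁ q₂ : PowerSeries A) (r₁ r₂ : Polynomial A),
      r₁.degree < (N : ℕ) → r₂.degree < (N : ℕ) →
      f * q₁ + (r₁ : PowerSeries A) = f * q₂ + (r₂ : PowerSeries A) →
      q₁ = q₂ ∧ r₁ = r₂ := by
    intro q₁ q₂ r₁ r₂ h₁ h₂ heq
    have hd : f * (q₁ - q₂) + ((r₁ - r₂ : Polynomial A) : PowerSeries A) = 0 := by
      push_cast
      linear_combination heq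
    have hdeg : (r₁ - r₂).degree < (N : ℕ) :=
      lt_of_le_of_lt (Polynomial.degree_sub_le _ _) (max_lt h₁ h₂)
    have hq : q₁ - q₂ = 0 := by
      apply key
      have hfd : f * (q₁ - q₂) = -((r₁ - r₂ : Polynomial A) : PowerSeries A) := by
        linear_combination hd
      have hshift : shift N (f * (q₁ - q₂)) = 0 := by
        rw [hfd, show -((r₁ - r₂ : Polynomial A) : PowerSeries A)
          = (0 : PowerSeries A) - ((r₁ - r₂ : Polynomial A) : PowerSeries A) by ring,
          shift_sub, coe_poly_shift_eq_zero (A := A) hdeg]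
        ext i; simp
      have hexp : f * (q₁ - q₂)
          = a * (q₁ - q₂) + PowerSeries.X ^ N * (b * (q₁ - q₂)) := by
        rw [hfab]; ring
      rw [hexp] at hshift
      have hsx : shift N (a * (q₁ - q₂) + PowerSeries.X ^ N * (b * (q₁ - q₂)))
          = shift N (a * (q₁ - q₂)) + b * (q₁ - q₂) := by
        ext i
        simp [PowerSeries.coeff_X_pow_mul]
      rw [hsx] at hshift
      linear_combination hshift
    have hq' : q₁ = q₂ := by linear_combination hq
    refine ⟨hq', ?_⟩
    have hr0 : ((r₁ - r₂ : Polynomial A) : PowerSeries A) = 0 := by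
      rw [hq, mul_zero, zero_add] at hd; exact hd
    have : (r₁ - r₂ : Polynomial A) = 0 := by exact_mod_cast hr0
    exact sub_eq_zero.mp this
  -- existence: sequence of approximations
  let Q : ℕ → PowerSeries A :=
    fun k => Nat.rec 0 (fun _ qk => binv * (shift N F - shift N (a * qk))) k
  have hQsucc : ∀ k, Q (k + 1) = binv * (shift N F - shift N (a * Q k)) := fun k => rfl
  have hbQ : ∀ k, b * Q (k + 1) = shift N F - shift N (a * Q k) := by
    intro k
    rw [hQsucc, ← mul_assoc, hbinv, one_mul]
  have hdiff : ∀ k j, PowerSeries.coeff j (Q (k + 1) - Q k) ∈ I ^ k := by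
    intro k
    induction k with
    | zero => intro j; simp
    | succ k ih =>
      intro j
      have hQd : Q (k + 2) - Q (k + 1) = binv * shift N (a * (Q k - Q (k + 1))) := by
        have h3 : shift N (a * (Q k - Q (k + 1)))
            = shift N (a * Q k) - shift N (a * Q (k + 1)) := by
          rw [mul_sub, shift_sub]
        rw [h3, hQsucc (k + 1), hQsucc k]
        ring
      rw [hQd]
      apply coeff_mul_mem_left
      intro i
      rw [coeff_shift]
      refine hstep k _ (fun j => ?_) _
      rw [show Q k - Q (k + 1) = -(Q (k + 1) - Q k) by ring, map_neg]
      exact neg_mem (ih j)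
  have hmono : ∀ (m n : ℕ), m ≤ n → ∀ j,
      PowerSeries.coeff j (Q n) - PowerSeries.coeff j (Q m) ∈ I ^ m := by
    intro m n hmn
    induction n, hmn using Nat.le_induction with
    | base => intro j; simp
    | succ n hmn ih =>
      intro j
      have h1 : PowerSeries.coeff j (Q (n + 1)) - PowerSeries.coeff j (Q n) ∈ I ^ m := by
        have := hdiff n j
        rw [map_sub] at this
        exact Ideal.pow_le_pow_right hmn this
      have := add_mem h1 (ih j)
      convert this using 1
      ring
  have hprec : ∀ j, ∃ L, ∀ n, PowerSeries.coeff j (Q n) ≡ L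
      [SMOD (I ^ n • ⊤ : Submodule A A)] := by
    intro j
    apply IsPrecomplete.prec (inferInstanceAs (IsPrecomplete I A))
    intro m n hmn
    rw [SModEq.sub_mem, smul_eq_mul, Ideal.mul_top]
    rw [show PowerSeries.coeff j (Q m) - PowerSeries.coeff j (Q n)
      = -(PowerSeries.coeff j (Q n) - PowerSeries.coeff j (Q m)) by ring]
    exact neg_mem (hmono m n hmn j)
  choose L hL using hprec
  set q : PowerSeries A := PowerSeries.mk L with hq_def
  have hq : ∀ k j, PowerSeries.coeff j (q - Q k) ∈ I ^ k := by
    intro k j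
    have := hL j k
    rw [SModEq.sub_mem, smul_eq_mul, Ideal.mul_top] at this
    rw [map_sub, hq_def, PowerSeries.coeff_mk,
      show L j - PowerSeries.coeff j (Q k)
        = -(PowerSeries.coeff j (Q k) - L j) by ring]
    exact neg_mem this
  -- the limit satisfies the division equation above degree `N`
  have hE : b * q + shift N (a * q) - shift N F = 0 := by
    ext j
    rw [map_zero]
    refine IsHausdorff.haus (inferInstance : IsHausdorff I A) _ fun k => ?_
    rw [SModEq.zero, smul_eq_mul, Ideal.mul_top]
    have hsplit : b * q + shift N (a * q) - shift N F
        = b * (q - Q k) + shift N (a * (q - Q k)) + b * (Q k - Q (k + 1)) := by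
      have h1 : shift N (a * (q - Q k)) = shift N (a * q) - shift N (a * Q k) := by
        rw [mul_sub, shift_sub]
      have h2 := hbQ k
      linear_combination -h1 + h2
    rw [hsplit, map_add, map_add]
    refine add_mem (add_mem ?_ ?_) ?_
    · exact coeff_mul_mem_left _ _ (hq k) j
    · rw [coeff_shift]
      exact coeff_mul_mem_left _ _ (hq k) _
    · refine coeff_mul_mem_left _ _ (fun i => ?_) j
      rw [show Q k - Q (k + 1) = -(Q (k + 1) - Q k) by ring, map_neg]
      exact neg_mem (hdiff k i)
  have hshift0 : shift N (F - f * q) = 0 := by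
    have hexp : F - f * q = F - a * q - PowerSeries.X ^ N * (b * q) := by
      rw [hfab]; ring
    have hsx : shift N (F - f * q) = shift N F - shift N (a * q) - b * q := by
      rw [hexp]
      ext i
      simp [PowerSeries.coeff_X_pow_mul]
    rw [hsx]
    linear_combination -hE
  set r : Polynomial A := PowerSeries.trunc N (F - f * q) with hr_def
  have hr : (r : PowerSeries A) = F - f * q := by
    have := trunc_decomp N (F - f * q)
    rw [hshift0, mul_zero, add_zero] at this
    exact this.symm
  refine ⟨(q, r), ⟨PowerSeries.degree_trunc_lt _ _, by rw [hr]; ring⟩, ?_⟩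
  rintro ⟨q', r'⟩ ⟨hd', he'⟩
  obtain ⟨h1, h2⟩ := uniq q' q r' r hd' (PowerSeries.degree_trunc_lt _ _)
    (by rw [hr, ← he']; ring)
  exact Prod.ext h1 h2
end

section
/- Let A be a commutative ring and I an ideal of A such that A is I-adically complete. Let N ≥ 1 and let f ∈ A⟦X⟧ be a formal power series whose coefficient of X^i lies in I for every i < N and whose coefficient of X^N is a unit of A. Then the quotient ring A⟦X⟧/(f) is a free A-module, and the residue classes of 1, X, X², …, X^{N−1} form an A-basis of it; in particular A⟦X⟧/(f) is free of rank N over A. -/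
open PowerSeries

namespace WeierstrassAux

variable {A : Type*} [CommRing A]

/-- Drop the first `N` coefficients of a power series. -/
noncomputable def tail (N : ℕ) (g : PowerSeries A) : PowerSeries A :=
  PowerSeries.mk fun i => coeff (N + i) g

@[simp] lemma coeff_tail (N j : ℕ) (g : PowerSeries A) :
    coeff j (tail N g) = coeff (N + j) g := by simp [tail]

lemma coeff_X_pow_mul_left (p : PowerSeries A) (n d : ℕ) :
    coeff (n + d) (X ^ n * p) = coeff d p := by
  rw [add_comm, coeff_X_pow_mul]

lemma coeff_mul_mem {J : Ideal A} {a : PowerSeries A} (ha : ∀ j, coeff j a ∈ J)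
    (b : PowerSeries A) (j : ℕ) : coeff j (a * b) ∈ J := by
  rw [coeff_mul]
  exact Ideal.sum_mem _ fun p _ => J.mul_mem_right _ (ha p.1)

lemma coeff_mul_mem_pow {I : Ideal A} {k : ℕ} {a e : PowerSeries A}
    (ha : ∀ j, coeff j a ∈ I ^ k) (he : ∀ j, coeff j e ∈ I) (j : ℕ) :
    coeff j (a * e) ∈ I ^ (k + 1) := by
  rw [coeff_mul]
  refine Ideal.sum_mem _ fun p _ => ?_
  rw [pow_succ]
  exact Ideal.mul_mem_mul (ha p.1) (he p.2)

lemma eq_zero_of_forall_coeff_mem {I : Ideal A} [IsAdicComplete I A] {x : PowerSeries A}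
    (h : ∀ n j, coeff j x ∈ I ^ n) : x = 0 := by
  ext j
  rw [map_zero]
  refine IsHausdorff.haus (inferInstance : IsHausdorff I A) _ fun n => ?_
  rw [SModEq.zero]
  simpa using h n j

end WeierstrassAux

open WeierstrassAux

set_option maxHeartbeats 2000000 in
/-- If `f ∈ A⟦X⟧` has coefficients below degree `N` in `I` (with `A` being `I`-adically
complete) and unit `N`-th coefficient, then `A⟦X⟧/(f)` is a free `A`-module with basis
the residue classes of `1, X, …, X^{N−1}`; in particular it is free of rank `N`. -/
theorem quotient_by_weierstrass_free {A : Type*} [CommRing A] (I : Ideal A)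
    [IsAdicComplete I A] (N : ℕ) (hN : 1 ≤ N) (f : PowerSeries A)
    (hI : ∀ i < N, PowerSeries.coeff i f ∈ I)
    (hunit : IsUnit (PowerSeries.coeff N f)) :
    ∃ b : Module.Basis (Fin N) A (PowerSeries A ⧸ Ideal.span {f}),
      ∀ i : Fin N,
        b i = Ideal.Quotient.mk (Ideal.span {f}) (PowerSeries.X ^ (i : ℕ)) := by
  classical
  -- the "unit part" of `f`
  set s : PowerSeries A := PowerSeries.mk fun i => coeff (N + i) f with hs
  have hsu : IsUnit s := by
    rw [PowerSeries.isUnit_iff_constantCoeff]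
    simpa [hs] using hunit
  set u : PowerSeries A := ↑hsu.unit⁻¹ with hudef
  have hu : s * u = 1 := hsu.mul_val_inv
  -- the "low part" of `f` has all coefficients in `I`
  have hrf : ∀ j, coeff j (f - X ^ N * s) ∈ I := by
    intro j
    rcases lt_or_ge j N with hj | hj
    · rw [map_sub, coeff_X_pow_mul', if_neg (by omega), sub_zero]
      exact hI j hj
    · obtain ⟨d, rfl⟩ := Nat.exists_eq_add_of_le hj
      rw [map_sub, coeff_X_pow_mul_left]
      simp [hs]
  set e : PowerSeries A := (f - X ^ N * s) * u with hedef
  have he : ∀ j, coeff j e ∈ I := coeff_mul_mem hrf u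
  have hfu : f * u = e + X ^ N := by
    have h1 : f * u = (f - X ^ N * s) * u + X ^ N * (s * u) := by ring
    rw [h1, hu, mul_one, hedef]
  -- Existence of the Weierstrass division
  have hexist : ∀ g : PowerSeries A, ∃ q r : PowerSeries A,
      g = f * q + r ∧ ∀ j, N ≤ j → coeff j r = 0 := by
    intro g
    -- successive approximations
    obtain ⟨T, hT0, hTsucc⟩ : ∃ T : ℕ → PowerSeries A, T 0 = 0 ∧
        ∀ n, T (n + 1) = tail N g - tail N (T n * e) :=
      ⟨fun n => Nat.rec 0 (fun _ t => tail N g - tail N (t * e)) n, rfl, fun n => rfl⟩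
    have htail_sub : ∀ a b : PowerSeries A, tail N a - tail N b = tail N (a - b) := by
      intro a b; ext k; simp
    have hstep : ∀ n, T (n + 1 + 1) - T (n + 1) = tail N ((T n - T (n + 1)) * e) := by
      intro n
      calc T (n + 1 + 1) - T (n + 1)
          = (tail N g - tail N (T (n + 1) * e)) - (tail N g - tail N (T n * e)) := by
            rw [hTsucc (n + 1), hTsucc n]
        _ = tail N (T n * e) - tail N (T (n + 1) * e) := by ring
        _ = tail N (T n * e - T (n + 1) * e) := htail_sub _ _
        _ = tail N ((T n - T (n + 1)) * e) := by rw [sub_mul]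
    have hdiff : ∀ n j, coeff j (T (n + 1) - T n) ∈ I ^ n := by
      intro n
      induction n with
      | zero =>
        intro j
        rw [pow_zero, Ideal.one_eq_top]
        exact Submodule.mem_top
      | succ n ih =>
        intro j
        have h3 : coeff j (T (n + 1 + 1) - T (n + 1)) ∈ I ^ (n + 1) := by
          rw [hstep n, coeff_tail]
          refine coeff_mul_mem_pow (fun k => ?_) he _
          rw [show T n - T (n + 1) = -(T (n + 1) - T n) by ring]
          exact neg_mem (ih k)
        exact h3
    have hchain : ∀ m n, m ≤ n → ∀ j, coeff j (T n) - coeff j (T m) ∈ I ^ m := by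
      intro m n hmn
      induction n, hmn using Nat.le_induction with
      | base => intro j; rw [sub_self]; exact zero_mem _
      | succ n hmn ih =>
        intro j
        have h1 : coeff j (T (n + 1)) - coeff j (T m)
            = coeff j (T (n + 1) - T n) + (coeff j (T n) - coeff j (T m)) := by
          rw [map_sub]; ring
        rw [h1]
        exact add_mem (Ideal.pow_le_pow_right hmn (hdiff n j)) (ih j)
    -- take the limit coefficientwise
    have hlim : ∀ j, ∃ L : A, ∀ n, coeff j (T n) - L ∈ I ^ n := by
      intro j
      obtain ⟨L, hL⟩ := IsPrecomplete.prec (inferInstance : IsPrecomplete I A)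
        (f := fun n => coeff j (T n)) (by
          intro m n hmn
          rw [SModEq.sub_mem]
          simpa [neg_sub] using neg_mem (hchain m n hmn j))
      refine ⟨L, fun n => ?_⟩
      have h2 := hL n
      rw [SModEq.sub_mem] at h2
      simpa using h2
    choose L hL using hlim
    set t : PowerSeries A := PowerSeries.mk L with htdef
    have hTt : ∀ n j, coeff j (T n) - coeff j t ∈ I ^ n := by
      intro n j
      simpa [htdef] using hL j n
    -- the limit satisfies the fixed-point equation
    have ht : t = tail N g - tail N (t * e) := by
      rw [← sub_eq_zero]
      refine eq_zero_of_forall_coeff_mem (I := I) fun n j => ?_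
      have h1 : coeff j (t - (tail N g - tail N (t * e)))
          = (coeff j t - coeff j (T (n + 1)))
            + coeff (N + j) ((t - T n) * e) := by
        rw [hTsucc n, sub_mul]
        simp only [map_sub, coeff_tail]
        ring
      rw [h1]
      have ha : coeff j t - coeff j (T (n + 1)) ∈ I ^ (n + 1) := by
        rw [show coeff j t - coeff j (T (n + 1))
            = -(coeff j (T (n + 1)) - coeff j t) by ring]
        exact neg_mem (hTt (n + 1) j)
      have hb : coeff (N + j) ((t - T n) * e) ∈ I ^ (n + 1) := by
        refine coeff_mul_mem_pow (fun k => ?_) he _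
        rw [map_sub, show coeff k t - coeff k (T n)
            = -(coeff k (T n) - coeff k t) by ring]
        exact neg_mem (hTt n k)
      exact add_mem (Ideal.pow_le_pow_right (Nat.le_succ n) ha)
        (Ideal.pow_le_pow_right (Nat.le_succ n) hb)
    refine ⟨u * t, g - f * (u * t), by ring, ?_⟩
    intro j hj
    obtain ⟨d, rfl⟩ := Nat.exists_eq_add_of_le hj
    have h2 : f * (u * t) = t * e + X ^ N * t := by
      rw [show f * (u * t) = (f * u) * t by ring, hfu]; ring
    have h3 := congrArg (coeff d) ht
    simp only [map_sub, coeff_tail] at h3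
    rw [map_sub, h2, map_add, coeff_X_pow_mul_left, h3]
    ring
  -- Uniqueness of the Weierstrass division
  have huniq : ∀ q r : PowerSeries A, f * q + r = 0 → (∀ j, N ≤ j → coeff j r = 0) →
      q = 0 ∧ r = 0 := by
    intro q r heq hr
    have hq0 : q = 0 := by
      refine eq_zero_of_forall_coeff_mem (I := I) fun k => ?_
      induction k with
      | zero =>
        intro j
        rw [pow_zero, Ideal.one_eq_top]
        exact Submodule.mem_top
      | succ k ih =>
        have hsq : ∀ d, coeff d (s * q) ∈ I ^ (k + 1) := by
          intro d
          have h1 : f * q = (f - X ^ N * s) * q + X ^ N * (s * q) := by ring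
          have h2 : coeff (N + d) (f * q) = 0 := by
            have h := congrArg (coeff (N + d)) heq
            rw [map_add, map_zero, hr (N + d) (by omega), add_zero] at h
            exact h
          have h3 : coeff (N + d) ((f - X ^ N * s) * q) ∈ I ^ (k + 1) := by
            rw [mul_comm]
            exact coeff_mul_mem_pow ih hrf (N + d)
          have h4 : coeff d (s * q)
              = coeff (N + d) (f * q) - coeff (N + d) ((f - X ^ N * s) * q) := by
            rw [h1, map_add, coeff_X_pow_mul_left]; ring
          rw [h4, h2, zero_sub]
          exact neg_mem h3
        intro j
        have h5 : q = (s * q) * u := by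
          rw [show (s * q) * u = (s * u) * q by ring, hu, one_mul]
        rw [h5]
        exact coeff_mul_mem hsq u j
    refine ⟨hq0, ?_⟩
    rw [hq0, mul_zero, zero_add] at heq
    exact heq
  -- build the basis
  set v : Fin N → PowerSeries A ⧸ Ideal.span {f} :=
    fun i => Ideal.Quotient.mk (Ideal.span {f}) (X ^ (i : ℕ)) with hv
  have hsum : ∀ c : Fin N → A, ∑ i, c i • v i
      = Ideal.Quotient.mk (Ideal.span {f}) (∑ i, c i • X ^ (i : ℕ)) := by
    intro c
    rw [← Ideal.Quotient.mkₐ_eq_mk A (Ideal.span {f}), map_sum]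
    refine Finset.sum_congr rfl fun i _ => ?_
    rw [map_smul, Ideal.Quotient.mkₐ_eq_mk]
  have coeff_sum : ∀ (c : Fin N → A) (j : ℕ),
      coeff j (∑ i, c i • X ^ (i : ℕ)) = if h : j < N then c ⟨j, h⟩ else 0 := by
    intro c j
    rw [map_sum]
    split_ifs with h
    · rw [Finset.sum_eq_single (⟨j, h⟩ : Fin N)]
      · simp [PowerSeries.coeff_X_pow]
      · intro i _ hi
        have hji : j ≠ (i : ℕ) := fun hji => hi (by ext; simp [← hji])
        simp [PowerSeries.coeff_X_pow, hji]
      · simp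
    · refine Finset.sum_eq_zero fun i _ => ?_
      have hji : j ≠ (i : ℕ) := by omega
      simp [PowerSeries.coeff_X_pow, hji]
  have hli : LinearIndependent A v := by
    rw [Fintype.linearIndependent_iff]
    intro c hc i
    rw [hsum] at hc
    have hmem : (∑ i, c i • X ^ (i : ℕ)) ∈ Ideal.span {f} :=
      (Ideal.Quotient.eq_zero_iff_mem).mp hc
    obtain ⟨q, hq⟩ := Ideal.mem_span_singleton'.mp hmem
    have h0 : f * q + -(∑ i, c i • X ^ (i : ℕ)) = 0 := by
      rw [← hq]; ring
    have hrc : ∀ j, N ≤ j → coeff (R := A) j (-(∑ i, c i • X ^ (i : ℕ))) = 0 := by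
      intro j hj
      rw [map_neg, coeff_sum, dif_neg (by omega), neg_zero]
    have hr0 := (huniq q (-(∑ i, c i • (X : PowerSeries A) ^ (i : ℕ))) h0 hrc).2
    have hzero : (∑ i, c i • (X : PowerSeries A) ^ (i : ℕ)) = 0 := by
      have := congrArg Neg.neg hr0
      simpa using this
    have hc2 := congrArg (coeff (R := A) (i : ℕ)) hzero
    rw [coeff_sum, dif_pos i.isLt, map_zero] at hc2
    simpa using hc2
  have hspan : ⊤ ≤ Submodule.span A (Set.range v) := by
    intro x _
    obtain ⟨g, rfl⟩ := Ideal.Quotient.mk_surjective x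
    obtain ⟨q, r, hgq, hr⟩ := hexist g
    have hrsum : r = ∑ i : Fin N, coeff (i : ℕ) r • X ^ (i : ℕ) := by
      ext j
      rw [coeff_sum]
      split_ifs with h
      · rfl
      · exact hr j (by omega)
    have hgr : Ideal.Quotient.mk (Ideal.span {f}) g
        = ∑ i : Fin N, coeff (i : ℕ) r • v i := by
      rw [hsum, ← hrsum, Ideal.Quotient.eq]
      exact Ideal.mem_span_singleton'.mpr ⟨q, by rw [hgq]; ring⟩
    rw [hgr]
    exact Submodule.sum_mem _ fun i _ =>
      Submodule.smul_mem _ _ (Submodule.subset_span ⟨i, rfl⟩)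
  exact ⟨Module.Basis.mk hli hspan, fun i => Module.Basis.mk_apply hli hspan i⟩
end

section
/- Let A be a commutative ring and I an ideal of A such that A is I-adically complete. Let g ∈ A[X] be a polynomial of degree N ≥ 1 whose coefficient of X^i lies in I for every i < N and whose leading coefficient is a unit of A; let u be a unit of the ring A⟦X⟧, and set f = u·g ∈ A⟦X⟧. Then the composite ring homomorphism A[X] → A⟦X⟧ → A⟦X⟧/(f) is surjective and its kernel is the ideal of A[X] generated by g; hence it induces a ring isomorphism A[X]/(g) ≅ A⟦X⟧/(f). -/
open PowerSeries Polynomial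

namespace WeierstrassDivAux

variable {A : Type*} [CommRing A]

/-- The "divide by `X^N`" shift operator on power series. -/
noncomputable def sigma (N : ℕ) (F : PowerSeries A) : PowerSeries A :=
  PowerSeries.mk fun k => PowerSeries.coeff (k + N) F

@[simp] lemma coeff_sigma (N k : ℕ) (F : PowerSeries A) :
    PowerSeries.coeff k (sigma N F) = PowerSeries.coeff (k + N) F :=
  PowerSeries.coeff_mk _ _

lemma coeff_mul_mem (I J : Ideal A) {a b : PowerSeries A}
    (ha : ∀ k, PowerSeries.coeff k a ∈ I) (hb : ∀ k, PowerSeries.coeff k b ∈ J)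
    (n : ℕ) : PowerSeries.coeff n (a * b) ∈ I * J := by
  rw [PowerSeries.coeff_mul]
  exact Ideal.sum_mem _ fun p _ => Ideal.mul_mem_mul (ha p.1) (hb p.2)

lemma smodeq_iff (I : Ideal A) (n : ℕ) (x y : A) :
    x ≡ y [SMOD (I ^ n • ⊤ : Submodule A A)] ↔ x - y ∈ I ^ n := by
  rw [SModEq.sub_mem, smul_eq_mul, Ideal.mul_top]

/-- Fixed point construction: there is `Q` with `Q = σ_N (F + Q s)`. -/
theorem exists_fixed_point (I : Ideal A) [IsAdicComplete I A] (N : ℕ)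
    (s : PowerSeries A) (hs : ∀ k, PowerSeries.coeff k s ∈ I) (F : PowerSeries A) :
    ∃ Q : PowerSeries A, ∀ k, PowerSeries.coeff k Q =
      PowerSeries.coeff (k + N) (F + Q * s) := by
  classical
  -- iterative approximations
  let q : ℕ → PowerSeries A := fun n =>
    Nat.rec 0 (fun _ qn => sigma N (F + qn * s)) n
  have hqs : ∀ n, q (n + 1) = sigma N (F + q n * s) := fun n => rfl
  have hstep : ∀ n k, PowerSeries.coeff k (q (n + 1) - q n) ∈ I ^ n := by
    intro n
    induction n with
    | zero => intro k; simp [Ideal.one_eq_top]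
    | succ n ih =>
      intro k
      have heq : PowerSeries.coeff k (q (n + 2) - q (n + 1)) =
          PowerSeries.coeff (k + N) ((q (n + 1) - q n) * s) := by
        rw [hqs (n + 1), hqs n]
        simp only [map_sub, coeff_sigma, map_add, sub_mul]
        ring
      rw [heq, pow_succ]
      exact coeff_mul_mem (I ^ n) I ih hs (k + N)
  have hdiff : ∀ m n, m ≤ n → ∀ k,
      PowerSeries.coeff k (q m) - PowerSeries.coeff k (q n) ∈ I ^ m := by
    intro m n h
    induction n, h using Nat.le_induction with
    | base => intro k; simp
    | succ n hmn ih =>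
      intro k
      have h1 : PowerSeries.coeff k (q n) - PowerSeries.coeff k (q (n + 1)) ∈ I ^ m := by
        have := hstep n k
        rw [map_sub] at this
        exact Ideal.pow_le_pow_right hmn (by simpa using neg_mem this)
      have := add_mem (ih k) h1
      simpa using this
  have hC : ∀ k, ∃ L, ∀ n, PowerSeries.coeff k (q n) ≡ L
      [SMOD (I ^ n • ⊤ : Submodule A A)] := by
    intro k
    refine IsPrecomplete.prec (IsAdicComplete.toIsPrecomplete) ?_
    intro m n h
    rw [smodeq_iff]
    exact hdiff m n h k
  choose L hL using hC
  refine ⟨PowerSeries.mk L, ?_⟩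
  have hQq : ∀ n k, PowerSeries.coeff k (PowerSeries.mk L) -
      PowerSeries.coeff k (q n) ∈ I ^ n := by
    intro n k
    have := (smodeq_iff I n _ _).mp (hL k n)
    rw [PowerSeries.coeff_mk]
    simpa using neg_mem this
  intro k
  have key : ∀ n, PowerSeries.coeff k (PowerSeries.mk L) -
      PowerSeries.coeff (k + N) (F + PowerSeries.mk L * s) ∈ I ^ n := by
    intro n
    have h1 : PowerSeries.coeff k (PowerSeries.mk L) -
        PowerSeries.coeff k (q (n + 1)) ∈ I ^ n :=
      Ideal.pow_le_pow_right (Nat.le_succ n) (hQq (n + 1) k)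
    have h2 : PowerSeries.coeff (k + N) ((q n - PowerSeries.mk L) * s) ∈ I ^ n := by
      have hmem := coeff_mul_mem (I ^ n) I
        (a := q n - PowerSeries.mk L) (b := s)
        (fun j => by
          have := hQq n j
          rw [map_sub]
          simpa using neg_mem this) hs (k + N)
      rw [← pow_succ] at hmem
      exact Ideal.pow_le_pow_right (Nat.le_succ n) hmem
    have heq : PowerSeries.coeff k (PowerSeries.mk L) -
        PowerSeries.coeff (k + N) (F + PowerSeries.mk L * s) =
        (PowerSeries.coeff k (PowerSeries.mk L) - PowerSeries.coeff k (q (n + 1))) +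
        PowerSeries.coeff (k + N) ((q n - PowerSeries.mk L) * s) := by
      rw [hqs]
      simp only [coeff_sigma, map_add, map_sub, sub_mul]
      ring
    rw [heq]
    exact add_mem h1 h2
  have h0 := IsHausdorff.haus (IsAdicComplete.toIsHausdorff (I := I) (M := A))
    (PowerSeries.coeff k (PowerSeries.mk L) -
      PowerSeries.coeff (k + N) (F + PowerSeries.mk L * s))
    (fun n => (smodeq_iff I n _ 0).mpr (by simpa using key n))
  exact sub_eq_zero.mp h0

/-- Uniqueness part: a fixed point of the homogeneous equation is zero. -/
theorem fixed_point_unique (I : Ideal A) [IsAdicComplete I A] (N : ℕ)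
    (s : PowerSeries A) (hs : ∀ k, PowerSeries.coeff k s ∈ I) (Q : PowerSeries A)
    (hQ : ∀ k, PowerSeries.coeff k Q = PowerSeries.coeff (k + N) (Q * s)) :
    Q = 0 := by
  have hmem : ∀ n k, PowerSeries.coeff k Q ∈ I ^ n := by
    intro n
    induction n with
    | zero => intro k; simp [Ideal.one_eq_top]
    | succ n ih =>
      intro k
      rw [hQ k, pow_succ]
      exact coeff_mul_mem (I ^ n) I ih hs (k + N)
  ext k
  have := IsHausdorff.haus (IsAdicComplete.toIsHausdorff (I := I) (M := A))
    (PowerSeries.coeff k Q)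
    (fun n => (smodeq_iff I n _ 0).mpr (by simpa using hmem n k))
  simpa using this

/-- Weierstrass division by a monic polynomial `g` of degree `N` all of whose
lower coefficients lie in `I`. -/
theorem main_monic (I : Ideal A) [IsAdicComplete I A] (N : ℕ) (hN : 1 ≤ N)
    (g : Polynomial A) (hg : g.Monic) (hdeg : g.degree = N)
    (hI : ∀ i < N, g.coeff i ∈ I) :
    Function.Surjective
      ((Ideal.Quotient.mk (Ideal.span {(g : PowerSeries A)})).comp
        Polynomial.coeToPowerSeries.ringHom) ∧
    RingHom.ker
      ((Ideal.Quotient.mk (Ideal.span {(g : PowerSeries A)})).comp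
        Polynomial.coeToPowerSeries.ringHom) = Ideal.span {g} := by
  classical
  have hnd : g.natDegree = N := natDegree_eq_of_degree_eq_some hdeg
  set s : PowerSeries A := (PowerSeries.X : PowerSeries A) ^ N - ↑g with hs_def
  have hgX : (↑g : PowerSeries A) = (PowerSeries.X : PowerSeries A) ^ N - s := by
    rw [hs_def]; ring
  have hs : ∀ k, PowerSeries.coeff k s ∈ I := by
    intro k
    rw [hs_def, map_sub, PowerSeries.coeff_X_pow, Polynomial.coeff_coe]
    rcases lt_trichotomy k N with h | h | h
    · rw [if_neg h.ne]
      simpa using neg_mem (hI k h)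
    · subst h
      rw [if_pos rfl, ← hnd, hg.coeff_natDegree]
      simp
    · rw [if_neg h.ne', coeff_eq_zero_of_natDegree_lt (hnd ▸ h)]
      simp
  -- existence of division with remainder
  have hdiv : ∀ F : PowerSeries A, ∃ (Q : PowerSeries A) (r : Polynomial A),
      r.degree < N ∧ F = Q * ↑g + ↑r := by
    intro F
    obtain ⟨Q, hQ⟩ := exists_fixed_point I N s hs F
    have hcoeff : ∀ k, PowerSeries.coeff (k + N) (F - Q * (↑g : PowerSeries A)) = 0 := by
      intro k
      rw [hgX]
      have e : PowerSeries.coeff (k + N)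
          (F - Q * ((PowerSeries.X : PowerSeries A) ^ N - s)) =
          PowerSeries.coeff (k + N) F + PowerSeries.coeff (k + N) (Q * s) -
            PowerSeries.coeff k Q := by
        have e2 : F - Q * ((PowerSeries.X : PowerSeries A) ^ N - s) =
            F + Q * s - Q * (PowerSeries.X : PowerSeries A) ^ N := by ring
        rw [e2, map_sub, map_add, PowerSeries.coeff_mul_X_pow]
      rw [e, ← map_add, ← hQ k]
      ring
    refine ⟨Q, PowerSeries.trunc N (F - Q * (g : PowerSeries A)),
      PowerSeries.degree_trunc_lt _ _, ?_⟩
    have htr : (↑(PowerSeries.trunc N (F - Q * (g : PowerSeries A))) : PowerSeries A)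
        = F - Q * (g : PowerSeries A) := by
      ext m
      rw [Polynomial.coeff_coe, PowerSeries.coeff_trunc]
      split_ifs with h
      · rfl
      · push_neg at h
        obtain ⟨k, rfl⟩ := Nat.exists_eq_add_of_le h
        have := hcoeff k
        rw [add_comm k N] at this
        exact this.symm
    rw [htr]; ring
  -- uniqueness of division: Q * g + r = 0 forces Q = 0 and r = 0
  have huniq : ∀ (Q : PowerSeries A) (r : Polynomial A), r.degree < N →
      Q * ↑g + ↑r = 0 → Q = 0 ∧ r = 0 := by
    intro Q r hr h
    have hrc : ∀ k, PowerSeries.coeff (k + N) (↑r : PowerSeries A) = 0 := by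
      intro k
      rw [Polynomial.coeff_coe]
      exact coeff_eq_zero_of_degree_lt
        (lt_of_lt_of_le hr (by exact_mod_cast Nat.le_add_left N k))
    have hQ0 : Q = 0 := by
      refine fixed_point_unique I N s hs Q ?_
      intro k
      have h2 : Q * (PowerSeries.X : PowerSeries A) ^ N = Q * s - ↑r := by
        linear_combination h - Q * hgX
      have h3 := congrArg (PowerSeries.coeff (k + N)) h2
      rw [PowerSeries.coeff_mul_X_pow, map_sub, hrc k, sub_zero] at h3
      exact h3
    refine ⟨hQ0, ?_⟩
    have : (↑r : PowerSeries A) = 0 := by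
      rw [hQ0] at h; simpa using h
    exact (Polynomial.coe_eq_zero_iff).mp this
  constructor
  · -- surjectivity
    intro x
    obtain ⟨F, rfl⟩ := Ideal.Quotient.mk_surjective x
    obtain ⟨Q, r, _, hFr⟩ := hdiv F
    refine ⟨r, ?_⟩
    rw [RingHom.comp_apply, Polynomial.coeToPowerSeries.ringHom_apply]
    rw [Ideal.Quotient.mk_eq_mk_iff_sub_mem]
    have : (↑r : PowerSeries A) - F = (-Q) * ↑g := by rw [hFr]; ring
    rw [this]
    exact Ideal.mem_span_singleton.mpr (Dvd.intro_left _ rfl)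
  · -- kernel
    ext p
    rw [RingHom.mem_ker, RingHom.comp_apply, Polynomial.coeToPowerSeries.ringHom_apply,
      Ideal.Quotient.eq_zero_iff_mem]
    constructor
    · intro hp
      obtain ⟨c, hc⟩ := Ideal.mem_span_singleton'.mp hp
      -- polynomial division
      have hmod : (p %ₘ g).degree < (N : WithBot ℕ) := by
        rw [← hdeg]
        have : Nontrivial A := by
          rcases subsingleton_or_nontrivial A with h | h
          · exfalso
            have : g = 0 := Subsingleton.elim g 0
            rw [this, degree_zero] at hdeg
            exact (by simp : ((⊥ : WithBot ℕ) ≠ (N : WithBot ℕ))) hdeg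
          · exact h
        exact degree_modByMonic_lt p hg
      have hpd : (↑p : PowerSeries A) =
          ↑(p %ₘ g) + (↑(p /ₘ g) : PowerSeries A) * ↑g := by
        conv_lhs => rw [← modByMonic_add_div p g]
        push_cast
        ring
      have h0 : ((↑(p /ₘ g) : PowerSeries A) - c) * (↑g : PowerSeries A)
          + ↑(p %ₘ g) = 0 := by
        rw [← hc] at hpd
        linear_combination -hpd
      obtain ⟨-, hr0⟩ := huniq _ _ hmod h0
      rw [Ideal.mem_span_singleton]
      exact (modByMonic_eq_zero_iff_dvd hg).mp hr0
    · intro hp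
      obtain ⟨c, rfl⟩ := Ideal.mem_span_singleton.mp hp
      refine Ideal.mem_span_singleton.mpr ⟨↑c, ?_⟩
      push_cast
      ring

end WeierstrassDivAux

/-- Let `g ∈ A[X]` be a polynomial of degree `N ≥ 1` with coefficients below degree `N`
in `I` (with `A` being `I`-adically complete) and unit leading coefficient, `u` a unit of
`A⟦X⟧`, and `f = u·g`. Then `A[X] → A⟦X⟧/(f)` is surjective with kernel `(g)`; hence it
induces a ring isomorphism `A[X]/(g) ≅ A⟦X⟧/(f)`. -/
theorem polynomial_quotient_eq_powerSeries_quotient {A : Type*} [CommRing A]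
    (I : Ideal A) [IsAdicComplete I A] (N : ℕ) (hN : 1 ≤ N) (g : Polynomial A)
    (hdeg : g.degree = N)
    (hI : ∀ i < N, g.coeff i ∈ I)
    (hlead : IsUnit g.leadingCoeff)
    (u : (PowerSeries A)ˣ) (f : PowerSeries A)
    (hf : f = (u : PowerSeries A) * (g : PowerSeries A)) :
    Function.Surjective
      ((Ideal.Quotient.mk (Ideal.span {f})).comp Polynomial.coeToPowerSeries.ringHom) ∧
    RingHom.ker
      ((Ideal.Quotient.mk (Ideal.span {f})).comp Polynomial.coeToPowerSeries.ringHom) =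
      Ideal.span {g} ∧
    Nonempty ((Polynomial A ⧸ Ideal.span {g}) ≃+* (PowerSeries A ⧸ Ideal.span {f})) := by
  classical
  open WeierstrassDivAux in
  -- reduce to the monic case
  set v := hlead.unit with hv
  set g' : Polynomial A := hlead.unit⁻¹ • g with hg'_def
  have hg' : g'.Monic := monic_of_isUnit_leadingCoeff_inv_smul hlead
  have hnd : g.natDegree = N := natDegree_eq_of_degree_eq_some hdeg
  have hnd' : g'.natDegree = N := by
    rw [hg'_def, natDegree_smul_of_smul_regular g (isSMulRegular_of_group _), hnd]
  have hg0 : g ≠ 0 := fun h => by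
    rw [h, Polynomial.degree_zero] at hdeg
    exact (by simp : ((⊥ : WithBot ℕ) ≠ (N : WithBot ℕ))) hdeg
  have hntA : Nontrivial A := by
    rcases subsingleton_or_nontrivial A with h | h
    · exact absurd (Subsingleton.elim g 0) hg0
    · exact h
  have hdeg' : g'.degree = N := by
    rw [Polynomial.degree_eq_natDegree hg'.ne_zero, hnd']
  have hI' : ∀ i < N, g'.coeff i ∈ I := by
    intro i hi
    rw [hg'_def, Polynomial.coeff_smul, Units.smul_def, smul_eq_mul]
    exact Ideal.mul_mem_left _ _ (hI i hi)
  -- g' = C (v⁻¹) * g and g = C v * g'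
  have hg'C : g' = Polynomial.C ((hlead.unit⁻¹ : Aˣ) : A) * g := by
    rw [hg'_def, Units.smul_def, Polynomial.smul_eq_C_mul]
  have hgC : g = Polynomial.C ((hlead.unit : Aˣ) : A) * g' := by
    rw [hg'C, ← mul_assoc, ← Polynomial.C_mul]
    simp
  -- span equalities
  have hspan1 : Ideal.span {g} = Ideal.span {g'} := by
    apply le_antisymm
    · rw [Ideal.span_singleton_le_span_singleton]
      exact ⟨Polynomial.C ((hlead.unit : Aˣ) : A), by rw [mul_comm]; exact hgC⟩
    · rw [Ideal.span_singleton_le_span_singleton]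
      exact ⟨Polynomial.C ((hlead.unit⁻¹ : Aˣ) : A), by rw [mul_comm]; exact hg'C⟩
  have hcoe : (↑g : PowerSeries A) =
      PowerSeries.C ((hlead.unit : Aˣ) : A) * ↑g' := by
    have := congrArg (fun p : Polynomial A => (p : PowerSeries A)) hgC
    simpa [Polynomial.coe_mul, Polynomial.coe_C] using this
  have hspan2 : Ideal.span {f} = Ideal.span {(↑g' : PowerSeries A)} := by
    apply le_antisymm
    · rw [Ideal.span_singleton_le_span_singleton]
      exact ⟨(↑u : PowerSeries A) * PowerSeries.C ((hlead.unit : Aˣ) : A),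
        by rw [hf, hcoe]; ring⟩
    · rw [Ideal.span_singleton_le_span_singleton]
      refine ⟨PowerSeries.C ((hlead.unit⁻¹ : Aˣ) : A) * (↑u⁻¹ : PowerSeries A), ?_⟩
      have hu : (↑u : PowerSeries A) * (↑u⁻¹ : PowerSeries A) = 1 := by
        rw [← Units.val_mul, mul_inv_cancel, Units.val_one]
      have hv' : PowerSeries.C ((hlead.unit : Aˣ) : A) *
          PowerSeries.C ((hlead.unit⁻¹ : Aˣ) : A) = 1 := by
        rw [← map_mul]
        simp
      have key : (↑u : PowerSeries A) * (PowerSeries.C ((hlead.unit : Aˣ) : A) * ↑g') *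
            (PowerSeries.C ((hlead.unit⁻¹ : Aˣ) : A) * (↑u⁻¹ : PowerSeries A)) = ↑g' := by
        calc (↑u : PowerSeries A) * (PowerSeries.C ((hlead.unit : Aˣ) : A) * ↑g') *
            (PowerSeries.C ((hlead.unit⁻¹ : Aˣ) : A) * (↑u⁻¹ : PowerSeries A))
            = ((↑u : PowerSeries A) * (↑u⁻¹ : PowerSeries A)) *
              (PowerSeries.C ((hlead.unit : Aˣ) : A) *
                PowerSeries.C ((hlead.unit⁻¹ : Aˣ) : A)) * ↑g' := by ring
          _ = ↑g' := by rw [hu, hv']; ring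
      rw [hf, hcoe]
      exact key.symm
  rw [hspan1, hspan2]
  obtain ⟨hsurj, hker⟩ := main_monic I N hN g' hg' hdeg' hI'
  exact ⟨hsurj, hker,
    ⟨(Ideal.quotEquivOfEq hker.symm).trans (RingHom.quotientKerEquivOfSurjective hsurj)⟩⟩
end

section
/- Let A be a commutative ring and h ∈ A[X] a polynomial such that the evaluation h(0) is not a zero divisor in A. Let B = A[X]/(X·h), denote by x̄ and h̄ the residue classes of X and h in B, and let ε : B → A be the A-algebra homomorphism determined by ε(x̄) = 0 (which is well defined since X·h has constant term 0). If an element t ∈ B satisfies x̄·t = 0 and ε(t) = h(0), then t = h̄. -/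
/-- In `B = A[X]/(X·h)` with `h(0)` a non-zero-divisor in `A`, let `ε : B → A` be the
`A`-algebra homomorphism with `ε(x̄) = 0`. If `t ∈ B` satisfies `x̄·t = 0` and
`ε(t) = h(0)`, then `t = h̄`. -/
theorem transfer_element_unique {A : Type*} [CommRing A] (h : Polynomial A)
    (hreg : h.eval 0 ∈ nonZeroDivisors A)
    (ε : (Polynomial A ⧸ Ideal.span {Polynomial.X * h}) →ₐ[A] A)
    (hε : ε (Ideal.Quotient.mk (Ideal.span {Polynomial.X * h}) Polynomial.X) = 0)
    (t : Polynomial A ⧸ Ideal.span {Polynomial.X * h})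
    (ht : Ideal.Quotient.mk (Ideal.span {Polynomial.X * h}) Polynomial.X * t = 0)
    (hεt : ε t = h.eval 0) :
    t = Ideal.Quotient.mk (Ideal.span {Polynomial.X * h}) h := by
  obtain ⟨p, rfl⟩ := Ideal.Quotient.mk_surjective t
  -- ε ∘ mk = eval at 0
  have hcomp : ∀ f : Polynomial A,
      ε (Ideal.Quotient.mk (Ideal.span {Polynomial.X * h}) f) = f.eval 0 := by
    intro f
    have : ε.comp (Ideal.Quotient.mkₐ A (Ideal.span {Polynomial.X * h}))
        = Polynomial.aeval (0 : A) := by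
      apply Polynomial.algHom_ext
      simpa using hε
    have := congrArg (fun φ => φ f) this
    simpa [Polynomial.aeval_def, Polynomial.eval₂_eq_eval_map] using this
  -- from ht, get p = h * q
  have hmem : Polynomial.X * p ∈ Ideal.span {Polynomial.X * h} := by
    rw [← map_mul] at ht
    exact (Ideal.Quotient.eq_zero_iff_mem).mp ht
  obtain ⟨q, hq⟩ := Ideal.mem_span_singleton'.mp hmem
  have hq' : Polynomial.X * p = Polynomial.X * (h * q) := by rw [← hq]; ring
  have hp : p = h * q := by
    ext n
    have := congrArg (fun r => Polynomial.coeff r (n + 1)) hq'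
    simpa [Polynomial.coeff_X_mul] using this
  -- evaluate at 0
  have heval : h.eval 0 * q.eval 0 = h.eval 0 := by
    have := hcomp p
    rw [hεt, hp] at this
    simpa using this.symm
  have hq0 : q.eval 0 = 1 := by
    have hz : (q.eval 0 - 1) * h.eval 0 = 0 := by linear_combination heval
    exact sub_eq_zero.mp ((mul_right_mem_nonZeroDivisors_eq_zero_iff hreg).mp hz)
  -- conclude
  rw [hp, Ideal.Quotient.eq]
  obtain ⟨r, hr⟩ := Polynomial.X_dvd_iff.mpr
    (show (q - 1).coeff 0 = 0 by
      have : q.coeff 0 = 1 := by rwa [Polynomial.coeff_zero_eq_eval_zero]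
      simp [this])
  have key : h * q - h = Polynomial.X * h * r := by linear_combination h * hr
  rw [key]
  exact Ideal.mem_span_singleton'.mpr ⟨r, by ring⟩
end

section
/- Let ℓ be a prime number and n ≥ 1 an integer. Let P be the polynomial ring over ℤ_{(ℓ)} (the localization of ℤ at the prime ideal (ℓ)) in countably many variables t₁, t₂, t₃, …, let A be the localization of P away from the single element t_{ℓⁿ−1}, and let I ⊆ A be the ideal generated by ℓ together with t_{ℓ−1}, t_{ℓ²−1}, …, t_{ℓ^{n−1}−1}. Then in the I-adic completion of A, i.e. the inverse limit of the rings A/Iᵏ, the images of ℓ and of each t_{ℓ^i−1} for 1 ≤ i ≤ n−1 are not zero divisors. -/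
/-- The ring of compatible sequences in `Π k, A ⧸ J k` for a decreasing sequence of
ideals `J`, i.e. the inverse limit `lim_k A/J_k`; for `J k = Iᵏ` this is the `I`-adic
completion of `A`. -/
def invLimit {A : Type*} [CommRing A] (J : ℕ → Ideal A) (hJ : ∀ k, J (k + 1) ≤ J k) :
    Subring (∀ k, A ⧸ J k) where
  carrier := {s | ∀ k, Ideal.Quotient.factor (hJ k) (s (k + 1)) = s k}
  zero_mem' := fun k => by simp
  one_mem' := fun k => by simp
  add_mem' := fun {a b} ha hb k => by simp only [Pi.add_apply, map_add, ha k, hb k]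
  neg_mem' := fun {a} ha k => by simp only [Pi.neg_apply, map_neg, ha k]
  mul_mem' := fun {a b} ha hb k => by simp only [Pi.mul_apply, map_mul, ha k, hb k]

/-- The natural ring homomorphism from `A` to the inverse limit `lim_k A/J_k`, sending an
element to the sequence of its residue classes. -/
def diagonalMap {A : Type*} [CommRing A] (J : ℕ → Ideal A)
    (hJ : ∀ k, J (k + 1) ≤ J k) : A →+* invLimit J hJ :=
  RingHom.codRestrict (Pi.ringHom fun k => Ideal.Quotient.mk (J k)) (invLimit J hJ)
    (fun a k => Ideal.Quotient.factor_mk (hJ k) a)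

open MvPolynomial

namespace AdicAux

variable {R : Type*} [CommRing R]

/-- The weighted degree: total degree in the variables belonging to `S`. -/
def wS (S : Finset ℕ+) (d : ℕ+ →₀ ℕ) : ℕ := ∑ i ∈ S, d i

lemma wS_add (S : Finset ℕ+) (d e : ℕ+ →₀ ℕ) : wS S (d + e) = wS S d + wS S e := by
  simp [wS, Finsupp.add_apply, Finset.sum_add_distrib]

lemma wS_single {S : Finset ℕ+} {i : ℕ+} (hi : i ∈ S) :
    wS S (Finsupp.single i 1) = 1 := by
  classical
  simp only [wS, Finsupp.single_apply]
  rw [Finset.sum_ite_eq]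
  simp [hi]

/-- The ideal of polynomials all of whose coefficients satisfy the weighted
divisibility condition of level `k`. -/
def Jk (c : R) (S : Finset ℕ+) (k : ℕ) : Ideal (MvPolynomial ℕ+ R) where
  carrier := {f | ∀ d, c ^ (k - wS S d) ∣ coeff d f}
  zero_mem' := fun d => by simp
  add_mem' := fun {a b} ha hb d => by
    simpa [coeff_add] using dvd_add (ha d) (hb d)
  smul_mem' := fun g f hf d => by
    rw [smul_eq_mul, coeff_mul]
    refine Finset.dvd_sum fun x hx => ?_
    have hx' := Finset.HasAntidiagonal.mem_antidiagonal.mp hx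
    have hle : k - wS S d ≤ k - wS S x.2 := by
      have : wS S x.1 + wS S x.2 = wS S d := by rw [← wS_add, hx']
      omega
    exact ((pow_dvd_pow c hle).trans (hf x.2)).mul_left _

lemma mem_Jk {c : R} {S : Finset ℕ+} {k : ℕ} {f : MvPolynomial ℕ+ R} :
    f ∈ Jk c S k ↔ ∀ d, c ^ (k - wS S d) ∣ coeff d f := Iff.rfl

/-- Generators: `C c` together with the variables in `S`. -/
def gens (c : R) (S : Finset ℕ+) : Set (MvPolynomial ℕ+ R) := {C c} ∪ X '' ↑S

lemma C_mem_gens (c : R) (S : Finset ℕ+) : C c ∈ Ideal.span (gens c S) :=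
  Ideal.subset_span (Or.inl rfl)

lemma X_mem_gens (c : R) {S : Finset ℕ+} {i : ℕ+} (hi : i ∈ S) :
    X i ∈ Ideal.span (gens c S) :=
  Ideal.subset_span (Or.inr ⟨i, hi, rfl⟩)

lemma sub_add_single_cancel {d : ℕ+ →₀ ℕ} {i : ℕ+} (h : i ∈ d.support) :
    (d - Finsupp.single i 1) + Finsupp.single i 1 = d := by
  have hd : 1 ≤ d i := Nat.one_le_iff_ne_zero.2 (Finsupp.mem_support_iff.1 h)
  ext j
  rcases eq_or_ne j i with rfl | hne
  · simp only [Finsupp.add_apply, Finsupp.tsub_apply, Finsupp.single_eq_same]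
    omega
  · simp [Finsupp.add_apply, Finsupp.tsub_apply, Finsupp.single_apply, (Ne.symm hne)]

lemma mul_gen {c : R} {S : Finset ℕ+} {k : ℕ} {f s : MvPolynomial ℕ+ R}
    (hf : f ∈ Jk c S k) (hs : s ∈ Ideal.span (gens c S)) :
    f * s ∈ Jk c S (k + 1) := by
  classical
  induction hs using Submodule.span_induction with
  | mem x hx =>
    rcases hx with hx | ⟨i, hi, rfl⟩
    · rw [Set.mem_singleton_iff] at hx
      subst hx
      intro d
      rw [mul_comm, coeff_C_mul]
      have h1 : c ^ (k + 1 - wS S d) ∣ c ^ (k - wS S d + 1) :=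
        pow_dvd_pow c (by omega)
      refine h1.trans ?_
      rw [pow_succ']
      exact mul_dvd_mul_left c (hf d)
    · intro d
      rw [mul_comm, coeff_X_mul']
      split
      · next h =>
        have h1 := hf (d - Finsupp.single i 1)
        have hw : wS S d = wS S (d - Finsupp.single i 1) + 1 := by
          conv_lhs => rw [← sub_add_single_cancel h]
          rw [wS_add, wS_single hi]
        exact (pow_dvd_pow c (by omega)).trans h1
      · exact dvd_zero _
  | zero => rw [mul_zero]; exact (Jk c S (k + 1)).zero_mem
  | add a b _ _ ha hb => rw [mul_add]; exact (Jk c S (k + 1)).add_mem ha hb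
  | smul r a _ ha => rw [mul_smul_comm]; exact (Jk c S (k + 1)).smul_mem r ha

lemma pow_le_Jk (c : R) (S : Finset ℕ+) (k : ℕ) :
    Ideal.span (gens c S) ^ k ≤ Jk c S k := by
  induction k with
  | zero => intro f _ d; simp
  | succ k ih =>
    rw [pow_succ]
    exact Ideal.mul_le.mpr fun r hr s hs => mul_gen (ih hr) hs

lemma prod_X_pow_mem (c : R) {S : Finset ℕ+} (d : ℕ+ →₀ ℕ) (T : Finset ℕ+)
    (hT : T ⊆ S) :
    (∏ i ∈ T, X i ^ d i : MvPolynomial ℕ+ R) ∈ Ideal.span (gens c S) ^ (∑ i ∈ T, d i) := by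
  classical
  induction T using Finset.induction with
  | empty => simp [Ideal.one_eq_top]
  | @insert a T' ha ih =>
    rw [Finset.prod_insert ha, Finset.sum_insert ha, pow_add]
    exact Ideal.mul_mem_mul
      (Ideal.pow_mem_pow (X_mem_gens c (hT (Finset.mem_insert_self a T'))) _)
      (ih fun x hx => hT (Finset.mem_insert_of_mem hx))

lemma monomial_mem {c : R} {S : Finset ℕ+} {k : ℕ} {d : ℕ+ →₀ ℕ} {r : R}
    (h : c ^ (k - wS S d) ∣ r) :
    (monomial d r : MvPolynomial ℕ+ R) ∈ Ideal.span (gens c S) ^ k := by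
  classical
  obtain ⟨y, rfl⟩ := h
  have hsum : ∑ i ∈ d.support ∩ S, d i = wS S d := by
    refine Finset.sum_subset Finset.inter_subset_right fun i hiS hiT => ?_
    have : i ∉ d.support := fun hs => hiT (Finset.mem_inter.2 ⟨hs, hiS⟩)
    simpa [Finsupp.mem_support_iff, not_not] using this
  have h1 : (∏ i ∈ d.support ∩ S, X i ^ d i : MvPolynomial ℕ+ R) ∈
      Ideal.span (gens c S) ^ wS S d := by
    rw [← hsum]
    exact prod_X_pow_mem c d _ Finset.inter_subset_right
  have h2 : ((C c : MvPolynomial ℕ+ R)) ^ (k - wS S d) ∈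
      Ideal.span (gens c S) ^ (k - wS S d) :=
    Ideal.pow_mem_pow (C_mem_gens c S) _
  have hkey : (C c : MvPolynomial ℕ+ R) ^ (k - wS S d) *
      ∏ i ∈ d.support ∩ S, X i ^ d i ∈
      Ideal.span (gens c S) ^ (k - wS S d + wS S d) := by
    rw [pow_add]
    exact Ideal.mul_mem_mul h2 h1
  have heq : (monomial d (c ^ (k - wS S d) * y) : MvPolynomial ℕ+ R) =
      (C y * ∏ i ∈ d.support \ S, X i ^ d i) *
        ((C c) ^ (k - wS S d) * ∏ i ∈ d.support ∩ S, X i ^ d i) := by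
    rw [monomial_eq, Finsupp.prod, ← Finset.prod_inter_mul_prod_diff d.support S,
      map_mul, map_pow]
    ring
  rw [heq]
  exact Ideal.pow_le_pow_right (by omega)
    (Ideal.mul_mem_left _ _ hkey)

lemma Jk_le_pow (c : R) (S : Finset ℕ+) (k : ℕ) :
    Jk c S k ≤ Ideal.span (gens c S) ^ k := by
  intro f hf
  rw [as_sum f]
  exact sum_mem fun d _ => monomial_mem (hf d)

lemma cancel_C [IsDomain R] {c : R} (hc : c ≠ 0) {S : Finset ℕ+} {k : ℕ}
    {f : MvPolynomial ℕ+ R} (h : C c * f ∈ Jk c S (k + 1)) : f ∈ Jk c S k := by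
  intro d
  have hd := h d
  rw [coeff_C_mul] at hd
  rcases le_or_gt (wS S d) k with hw | hw
  · have he : k + 1 - wS S d = k - wS S d + 1 := by omega
    rw [he, pow_succ'] at hd
    obtain ⟨y, hy⟩ := hd
    exact ⟨y, mul_left_cancel₀ hc (hy.trans (mul_assoc _ _ _))⟩
  · simp [Nat.sub_eq_zero_of_le hw.le]

lemma cancel_X {c : R} {S : Finset ℕ+} {i : ℕ+} (hi : i ∈ S) {k : ℕ}
    {f : MvPolynomial ℕ+ R} (h : X i * f ∈ Jk c S (k + 1)) : f ∈ Jk c S k := by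
  intro d
  have hd := h (Finsupp.single i 1 + d)
  rw [coeff_X_mul] at hd
  rwa [wS_add, wS_single hi,
    show k + 1 - (1 + wS S d) = k - wS S d by omega] at hd

lemma key_cancel [IsDomain R] {c : R} (hc : c ≠ 0) {S : Finset ℕ+}
    {a : MvPolynomial ℕ+ R} (ha : a = C c ∨ ∃ i ∈ S, a = X i) (k : ℕ)
    (f : MvPolynomial ℕ+ R) (h : a * f ∈ Ideal.span (gens c S) ^ (k + 1)) :
    f ∈ Ideal.span (gens c S) ^ k := by
  apply Jk_le_pow
  have h' := pow_le_Jk c S (k + 1) h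
  rcases ha with rfl | ⟨i, hi, rfl⟩
  · exact cancel_C hc h'
  · exact cancel_X hi h'

end AdicAux
namespace AdicAux

lemma mem_of_mul_isUnit {A : Type*} [CommRing A] {I : Ideal A} {x u : A}
    (hu : IsUnit u) (h : x * u ∈ I) : x ∈ I := by
  obtain ⟨v, hv⟩ := hu.exists_right_inv
  have h2 := I.mul_mem_right v h
  rwa [mul_assoc, hv, mul_one] at h2

lemma diag_coe {A : Type*} [CommRing A] (J : ℕ → Ideal A)
    (hJ : ∀ k, J (k + 1) ≤ J k) (x : A) (k : ℕ) :
    (diagonalMap J hJ x : ∀ k, A ⧸ J k) k = Ideal.Quotient.mk (J k) x := rfl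

lemma diag_mem_nonZeroDivisors {A : Type*} [CommRing A] {I : Ideal A}
    (hpow : ∀ k, I ^ (k + 1) ≤ I ^ k) {x : A}
    (hx : ∀ (k : ℕ) (b : A), x * b ∈ I ^ (k + 1) → b ∈ I ^ k) :
    diagonalMap (fun k => I ^ k) hpow x ∈
      nonZeroDivisors ↥(invLimit (fun k => I ^ k) hpow) := by
  rw [mem_nonZeroDivisors_iff_right]
  intro z hz
  apply Subtype.ext
  funext k
  show (z : ∀ k, A ⧸ I ^ k) k = 0
  obtain ⟨b, hb⟩ := Ideal.Quotient.mk_surjective ((z : ∀ k, A ⧸ I ^ k) (k + 1))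
  have h1 : (z : ∀ k, A ⧸ I ^ k) (k + 1) *
      Ideal.Quotient.mk (I ^ (k + 1)) x = 0 := by
    have h0 := congrArg
      (fun s : ↥(invLimit (fun k => I ^ k) hpow) => (s : ∀ k, A ⧸ I ^ k) (k + 1)) hz
    simp only [MulMemClass.coe_mul, Pi.mul_apply, ZeroMemClass.coe_zero,
      Pi.zero_apply, diag_coe] at h0
    exact h0
  rw [← hb, ← map_mul] at h1
  have h2 : b ∈ I ^ k := hx k b (by
    rw [mul_comm]
    exact (Ideal.Quotient.eq_zero_iff_mem).mp h1)
  have h3 := z.2 k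
  rw [← h3, ← hb, Ideal.Quotient.factor_mk]
  exact (Ideal.Quotient.eq_zero_iff_mem).mpr h2

end AdicAux

open MvPolynomial AdicAux in
/-- Let `P = ℤ_{(ℓ)}[t₁, t₂, …]` (variables indexed by `ℕ+`), `A` the localization of `P`
away from `t_{ℓⁿ−1}`, and `I ⊆ A` the ideal generated by `ℓ` and `t_{ℓ−1}, …,
t_{ℓ^{n−1}−1}`. Then in the `I`-adic completion `lim_k A/Iᵏ` of `A`, the images of `ℓ`
and of each `t_{ℓ^i−1}` (for `1 ≤ i ≤ n−1`) are not zero divisors. -/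
theorem not_zeroDivisor_in_adic_completion (ℓ n : ℕ) (hl : ℓ.Prime) (hn : 1 ≤ n)
    [hp : (Ideal.span {(ℓ : ℤ)}).IsPrime]
    (t : ℕ → MvPolynomial ℕ+ (Localization.AtPrime (Ideal.span {(ℓ : ℤ)})))
    (ht : ∀ m : ℕ+, t (m : ℕ) = MvPolynomial.X m)
    (A : Type*) [CommRing A]
    [Algebra (MvPolynomial ℕ+ (Localization.AtPrime (Ideal.span {(ℓ : ℤ)}))) A]
    [IsLocalization.Away (t (ℓ ^ n - 1)) A]
    (I : Ideal A)
    (hI : I = Ideal.span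
      ({(ℓ : A)} ∪
        algebraMap (MvPolynomial ℕ+ (Localization.AtPrime (Ideal.span {(ℓ : ℤ)}))) A ''
          {p | ∃ i, 1 ≤ i ∧ i ≤ n - 1 ∧ p = t (ℓ ^ i - 1)}))
    (hpow : ∀ k, I ^ (k + 1) ≤ I ^ k) :
    diagonalMap (fun k => I ^ k) hpow (ℓ : A) ∈
        nonZeroDivisors ↥(invLimit (fun k => I ^ k) hpow) ∧
    ∀ i, 1 ≤ i → i ≤ n - 1 →
      diagonalMap (fun k => I ^ k) hpow
          (algebraMap (MvPolynomial ℕ+ (Localization.AtPrime (Ideal.span {(ℓ : ℤ)}))) A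
            (t (ℓ ^ i - 1))) ∈
        nonZeroDivisors ↥(invLimit (fun k => I ^ k) hpow) := by
  classical
  haveI : IsDomain (Localization.AtPrime (Ideal.span {(ℓ : ℤ)})) :=
    IsLocalization.isDomain_of_local_atPrime hp
  -- the variable-indexing function
  set f : ℕ → ℕ+ := fun i => ⟨max 1 (ℓ ^ i - 1), lt_of_lt_of_le Nat.zero_lt_one (le_max_left _ _)⟩
    with hf
  have hl2 : 2 ≤ ℓ := hl.two_le
  have hfv : ∀ i, 1 ≤ i → ((f i : ℕ)) = ℓ ^ i - 1 := by
    intro i hi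
    have h2 : 2 ≤ ℓ ^ i := le_trans hl2 (Nat.le_self_pow (by omega) ℓ)
    show max 1 (ℓ ^ i - 1) = ℓ ^ i - 1
    omega
  have hts : ∀ i, 1 ≤ i → t (ℓ ^ i - 1) = X (f i) := by
    intro i hi
    rw [← hfv i hi]
    exact ht (f i)
  set S : Finset ℕ+ := (Finset.Icc 1 (n - 1)).image f with hS
  set c : Localization.AtPrime (Ideal.span {(ℓ : ℤ)}) := (ℓ : Localization.AtPrime (Ideal.span {(ℓ : ℤ)})) with hc'
  -- ℓ is nonzero in R
  have hinjZ : Function.Injective (algebraMap ℤ (Localization.AtPrime (Ideal.span {(ℓ : ℤ)}))) :=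
    IsLocalization.injective (M := (Ideal.span {(ℓ : ℤ)}).primeCompl)
      (Localization.AtPrime (Ideal.span {(ℓ : ℤ)}))
      (Ideal.primeCompl_le_nonZeroDivisors _)
  have hc : c ≠ 0 := by
    intro h0
    have h1 : ((ℓ : ℤ) : Localization.AtPrime (Ideal.span {(ℓ : ℤ)}))
        = ((0 : ℤ) : Localization.AtPrime (Ideal.span {(ℓ : ℤ)})) := by
      push_cast
      exact h0
    have h2 : (ℓ : ℤ) = 0 :=
      hinjZ (((map_intCast _ _).trans h1).trans (map_intCast _ _).symm)
    omega
  -- identification of the constant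
  have hCl : algebraMap (MvPolynomial ℕ+ (Localization.AtPrime (Ideal.span {(ℓ : ℤ)}))) A (C c) = (ℓ : A) := by
    rw [show (C c : MvPolynomial ℕ+ (Localization.AtPrime (Ideal.span {(ℓ : ℤ)})))
      = ((ℓ : ℕ) : MvPolynomial ℕ+ (Localization.AtPrime (Ideal.span {(ℓ : ℤ)})))
      from map_natCast (C : _ →+* MvPolynomial ℕ+ (Localization.AtPrime (Ideal.span {(ℓ : ℤ)}))) ℓ]
    exact map_natCast (algebraMap (MvPolynomial ℕ+ (Localization.AtPrime (Ideal.span {(ℓ : ℤ)}))) A) ℓ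
  -- identification of generating sets
  have hXS : (X '' ↑S : Set (MvPolynomial ℕ+ (Localization.AtPrime (Ideal.span {(ℓ : ℤ)})))) =
      {p | ∃ i, 1 ≤ i ∧ i ≤ n - 1 ∧ p = t (ℓ ^ i - 1)} := by
    ext p
    simp only [hS, Finset.coe_image, Set.image_image, Set.mem_image, Finset.mem_coe,
      Finset.mem_Icc, Set.mem_setOf_eq]
    constructor
    · rintro ⟨i, ⟨h1, h2⟩, rfl⟩
      exact ⟨i, h1, h2, (hts i h1).symm⟩
    · rintro ⟨i, h1, h2, rfl⟩
      exact ⟨i, ⟨h1, h2⟩, (hts i h1).symm⟩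
  have hImap : I = Ideal.map (algebraMap (MvPolynomial ℕ+ (Localization.AtPrime (Ideal.span {(ℓ : ℤ)}))) A) (Ideal.span (gens c S)) := by
    rw [Ideal.map_span, hI]
    congr 1
    rw [show gens c S = {C c} ∪ X '' ↑S from rfl, Set.image_union, Set.image_singleton,
      hXS, hCl]
  have hIpow : ∀ k : ℕ, I ^ k = Ideal.map (algebraMap (MvPolynomial ℕ+ (Localization.AtPrime (Ideal.span {(ℓ : ℤ)}))) A) (Ideal.span (gens c S) ^ k) := by
    intro k
    rw [hImap, Ideal.map_pow]
  -- injectivity of the localization map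
  have hs0 : t (ℓ ^ n - 1) ≠ 0 := by
    rw [hts n hn]
    exact X_ne_zero _
  have hinj : Function.Injective
      (algebraMap (MvPolynomial ℕ+ (Localization.AtPrime (Ideal.span {(ℓ : ℤ)}))) A) :=
    IsLocalization.injective (M := Submonoid.powers (t (ℓ ^ n - 1))) A
      (powers_le_nonZeroDivisors_of_noZeroDivisors hs0)
  -- the main cancellation step, transferred to A
  have main : ∀ a : MvPolynomial ℕ+ (Localization.AtPrime (Ideal.span {(ℓ : ℤ)})),
      (a = C c ∨ ∃ i ∈ S, a = X i) →
      ∀ (k : ℕ) (b : A), algebraMap (MvPolynomial ℕ+ (Localization.AtPrime (Ideal.span {(ℓ : ℤ)}))) A a * b ∈ I ^ (k + 1) → b ∈ I ^ k := by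
    intro a ha k b hab
    obtain ⟨⟨p, s⟩, hps⟩ := IsLocalization.surj (M := Submonoid.powers (t (ℓ ^ n - 1))) b
    have h1 : algebraMap (MvPolynomial ℕ+ (Localization.AtPrime (Ideal.span {(ℓ : ℤ)}))) A (a * p) ∈ I ^ (k + 1) := by
      have h0 := (I ^ (k + 1)).mul_mem_right (algebraMap (MvPolynomial ℕ+ (Localization.AtPrime (Ideal.span {(ℓ : ℤ)}))) A (s : MvPolynomial ℕ+ (Localization.AtPrime (Ideal.span {(ℓ : ℤ)})))) hab
      rwa [mul_assoc, hps, ← map_mul] at h0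
    rw [hIpow (k + 1)] at h1
    obtain ⟨⟨q, m⟩, hq⟩ :=
      (IsLocalization.mem_map_algebraMap_iff (Submonoid.powers (t (ℓ ^ n - 1))) A).mp h1
    have h2 : a * (p * (m : MvPolynomial ℕ+ (Localization.AtPrime (Ideal.span {(ℓ : ℤ)})))) ∈ Ideal.span (gens c S) ^ (k + 1) := by
      have he : a * p * (m : MvPolynomial ℕ+ (Localization.AtPrime (Ideal.span {(ℓ : ℤ)}))) = (q : MvPolynomial ℕ+ (Localization.AtPrime (Ideal.span {(ℓ : ℤ)}))) := hinj (by rw [map_mul]; exact hq)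
      rw [← mul_assoc, he]
      exact q.2
    have h3 := key_cancel hc ha k _ h2
    have h4 : algebraMap (MvPolynomial ℕ+ (Localization.AtPrime (Ideal.span {(ℓ : ℤ)}))) A (p * (m : MvPolynomial ℕ+ (Localization.AtPrime (Ideal.span {(ℓ : ℤ)})))) ∈ I ^ k := by
      rw [hIpow k]
      exact Ideal.mem_map_of_mem _ h3
    have h5 : b * algebraMap (MvPolynomial ℕ+ (Localization.AtPrime (Ideal.span {(ℓ : ℤ)}))) A (s : MvPolynomial ℕ+ (Localization.AtPrime (Ideal.span {(ℓ : ℤ)}))) * algebraMap (MvPolynomial ℕ+ (Localization.AtPrime (Ideal.span {(ℓ : ℤ)}))) A (m : MvPolynomial ℕ+ (Localization.AtPrime (Ideal.span {(ℓ : ℤ)}))) ∈ I ^ k := by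
      rw [hps, ← map_mul]
      exact h4
    exact mem_of_mul_isUnit (IsLocalization.map_units A s)
      (mem_of_mul_isUnit (IsLocalization.map_units A m) h5)
  constructor
  · apply diag_mem_nonZeroDivisors hpow
    intro k b h
    exact main (C c) (Or.inl rfl) k b (by rwa [hCl])
  · intro i h1 h2
    apply diag_mem_nonZeroDivisors hpow
    intro k b h
    have hfi : f i ∈ S := Finset.mem_image.2 ⟨i, Finset.mem_Icc.2 ⟨h1, h2⟩, rfl⟩
    apply main (X (f i)) (Or.inr ⟨f i, hfi, rfl⟩) k b
    rwa [← hts i h1]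
end
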